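/- Let P be a complete Boolean algebra and G its full automorphism group. For any π ∈ G and p ∈ P there exists an involution σ ∈ G such that σ acts as the identity on elements below the complement of p ∨ π(p), agrees with π below p, and agrees with π⁻¹ below π(p), provided p ∧ π(p) = 0. -/
import Mathlib


/-- In a complete Boolean algebra, given an automorphism `π` and an element `p` with
`p ⊓ π p = ⊥`, there is an involution acting as the identity below `(p ⊔ π p)ᶜ`,
as `π` below `p`, and as `π⁻¹` below `π p`. -/
theorem stmt8 {P : Type*} [CompleteBooleanAlgebra P] (π : P ≃o P) (p : P)
    (hdisj : p ⊓ π p = ⊥) :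
    ∃ σ : P ≃o P, (∀ r : P, σ (σ r) = r) ∧
      (∀ r : P, r ≤ (p ⊔ π p)ᶜ → σ r = r) ∧
      (∀ r : P, r ≤ p → σ r = π r) ∧
      (∀ r : P, r ≤ π p → σ r = π.symm r) := by
  set c := (p ⊔ π p)ᶜ with hc
  set f : P → P := fun r => (r ⊓ c) ⊔ π (r ⊓ p) ⊔ π.symm (r ⊓ π p) with hf
  have hcp : c ⊓ p = ⊥ := by
    apply le_bot_iff.mp
    calc c ⊓ p ≤ (p ⊔ π p)ᶜ ⊓ (p ⊔ π p) := inf_le_inf le_rfl le_sup_left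
    _ = ⊥ := compl_inf_eq_bot
  have hcq : c ⊓ π p = ⊥ := by
    apply le_bot_iff.mp
    calc c ⊓ π p ≤ (p ⊔ π p)ᶜ ⊓ (p ⊔ π p) := inf_le_inf le_rfl le_sup_right
    _ = ⊥ := compl_inf_eq_bot
  have hmono : Monotone f := by
    intro r s h
    exact sup_le_sup (sup_le_sup (inf_le_inf_right _ h)
      (π.monotone (inf_le_inf_right _ h))) (π.symm.monotone (inf_le_inf_right _ h))
  -- auxiliary bounds
  have hb1 : ∀ r : P, π (r ⊓ p) ≤ π p := fun r => π.monotone inf_le_right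
  have hb2 : ∀ r : P, π.symm (r ⊓ π p) ≤ p := fun r => by
    have := π.symm.monotone (inf_le_right : r ⊓ π p ≤ π p)
    simp only [OrderIso.symm_apply_apply] at this
    exact this
  have key1 : ∀ r : P, f r ⊓ c = r ⊓ c := by
    intro r
    have h1 : π (r ⊓ p) ⊓ c = ⊥ := le_bot_iff.mp <| by
      calc π (r ⊓ p) ⊓ c ≤ π p ⊓ c := inf_le_inf_right _ (hb1 r)
      _ = ⊥ := by rw [inf_comm, hcq]
    have h2 : π.symm (r ⊓ π p) ⊓ c = ⊥ := le_bot_iff.mp <| by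
      calc π.symm (r ⊓ π p) ⊓ c ≤ p ⊓ c := inf_le_inf_right _ (hb2 r)
      _ = ⊥ := by rw [inf_comm, hcp]
    simp only [hf, inf_sup_right, inf_assoc, inf_idem, h1, h2, sup_bot_eq]
  have key2 : ∀ r : P, f r ⊓ p = π.symm (r ⊓ π p) := by
    intro r
    have h0 : (r ⊓ c) ⊓ p = ⊥ := by
      rw [inf_assoc, hcp, inf_bot_eq]
    have h1 : π (r ⊓ p) ⊓ p = ⊥ := le_bot_iff.mp <| by
      calc π (r ⊓ p) ⊓ p ≤ π p ⊓ p := inf_le_inf_right _ (hb1 r)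
      _ = ⊥ := by rw [inf_comm, hdisj]
    have h2 : π.symm (r ⊓ π p) ⊓ p = π.symm (r ⊓ π p) := inf_eq_left.mpr (hb2 r)
    simp only [hf, inf_sup_right, h0, h1, h2, bot_sup_eq, sup_bot_eq]
  have key3 : ∀ r : P, f r ⊓ π p = π (r ⊓ p) := by
    intro r
    have h0 : (r ⊓ c) ⊓ π p = ⊥ := by
      rw [inf_assoc, hcq, inf_bot_eq]
    have h1 : π (r ⊓ p) ⊓ π p = π (r ⊓ p) := inf_eq_left.mpr (hb1 r)
    have h2 : π.symm (r ⊓ π p) ⊓ π p = ⊥ := le_bot_iff.mp <| by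
      calc π.symm (r ⊓ π p) ⊓ π p ≤ p ⊓ π p := inf_le_inf_right _ (hb2 r)
      _ = ⊥ := hdisj
    simp only [hf, inf_sup_right, h0, h1, h2, bot_sup_eq, sup_bot_eq]
  have hinv : ∀ r : P, f (f r) = r := by
    intro r
    have : f (f r) = (r ⊓ c) ⊔ (r ⊓ π p) ⊔ (r ⊓ p) := by
      show (f r ⊓ c) ⊔ π (f r ⊓ p) ⊔ π.symm (f r ⊓ π p) = _
      rw [key1, key2, key3]
      simp
    rw [this, ← inf_sup_left, ← inf_sup_left]
    have htop : c ⊔ π p ⊔ p = ⊤ := by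
      rw [hc, sup_assoc, sup_comm (π p) p, compl_sup_eq_top]
    rw [htop, inf_top_eq]
  refine ⟨{ toEquiv := ⟨f, f, hinv, hinv⟩, map_rel_iff' := ?_ }, ?_, ?_, ?_, ?_⟩
  · intro a b
    constructor
    · intro h
      simpa only [Equiv.coe_fn_mk, hinv] using hmono h
    · exact fun h => hmono h
  · exact hinv
  · intro r hr
    show f r = r
    have h1 : r ⊓ c = r := inf_eq_left.mpr hr
    have h2 : r ⊓ p = ⊥ := le_bot_iff.mp <| by
      calc r ⊓ p ≤ c ⊓ p := inf_le_inf_right _ hr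
      _ = ⊥ := hcp
    have h3 : r ⊓ π p = ⊥ := le_bot_iff.mp <| by
      calc r ⊓ π p ≤ c ⊓ π p := inf_le_inf_right _ hr
      _ = ⊥ := hcq
    show r ⊓ c ⊔ π (r ⊓ p) ⊔ π.symm (r ⊓ π p) = r
    rw [h1, h2, h3]
    simp
  · intro r hr
    show f r = π r
    have h1 : r ⊓ c = ⊥ := le_bot_iff.mp <| by
      calc r ⊓ c ≤ p ⊓ c := inf_le_inf_right _ hr
      _ = ⊥ := by rw [inf_comm, hcp]
    have h2 : r ⊓ p = r := inf_eq_left.mpr hr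
    have h3 : r ⊓ π p = ⊥ := le_bot_iff.mp <| by
      calc r ⊓ π p ≤ p ⊓ π p := inf_le_inf_right _ hr
      _ = ⊥ := hdisj
    show r ⊓ c ⊔ π (r ⊓ p) ⊔ π.symm (r ⊓ π p) = π r
    rw [h1, h2, h3]
    simp
  · intro r hr
    show f r = π.symm r
    have h1 : r ⊓ c = ⊥ := le_bot_iff.mp <| by
      calc r ⊓ c ≤ π p ⊓ c := inf_le_inf_right _ hr
      _ = ⊥ := by rw [inf_comm, hcq]
    have h2 : r ⊓ p = ⊥ := le_bot_iff.mp <| by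
      calc r ⊓ p ≤ π p ⊓ p := inf_le_inf_right _ hr
      _ = ⊥ := by rw [inf_comm, hdisj]
    have h3 : r ⊓ π p = r := inf_eq_left.mpr hr
    show r ⊓ c ⊔ π (r ⊓ p) ⊔ π.symm (r ⊓ π p) = π.symm r
    rw [h1, h2, h3]
    simp
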